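/- arXiv:1107.0418 — 3 statements merged into one kernel-verified Lean document; each statement's English description precedes it below -/
import Mathlib

section
/- Let A be a unital C*-algebra and let x₁, x₂ ∈ A. The 3×3 matrix over A with diagonal entries (1,1,1), superdiagonal entries (x₁, x₂), subdiagonal entries (x₁*, x₂*), and zeros elsewhere is strictly positive (i.e. ≥ δ·1 for some δ > 0) in M₃(A) if and only if 1 - x₁*x₁ - x₂x₂* is strictly positive in A. -/
/-!
Writing `c = 1 - x₁⋆x₁ - x₂x₂⋆`, the matrix factors as `N⋆ · diag(1, c, 1) · N` with
`N = [[1, x₁, 0], [0, 1, 0], [0, x₂⋆, 1]]` invertible (a Schur-complement elimination of the middle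
row and column). Strict positivity is preserved by such congruences, and a diagonal matrix is
strictly positive exactly when its entries are.
-/

open scoped ComplexOrder

/-- An element of a unital C*-algebra is strictly positive if it dominates a positive
multiple of the identity. -/
def IsStrictlyPositive' {A : Type*} [CStarAlgebra A] [PartialOrder A] [StarOrderedRing A]
    (s : A) : Prop :=
  ∃ δ : ℝ, 0 < δ ∧ algebraMap ℝ A δ ≤ s

/-- A square matrix over a unital C*-algebra is strictly positive iff it is positive
(a "square": `star B * B`) and invertible; this is equivalent to dominating `δ • 1` in the
C*-algebra `Mₙ(A) ≅` itself. -/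
def Matrix.IsStrictlyPositive {A : Type*} [CStarAlgebra A] {n : ℕ}
    (M : Matrix (Fin n) (Fin n) A) : Prop :=
  (∃ B : Matrix (Fin n) (Fin n) A, M = star B * B) ∧ IsUnit M

theorem isStrictlyPositive'_iff_isStrictlyPositive {A : Type*} [CStarAlgebra A] [PartialOrder A]
    [StarOrderedRing A] {a : A} : IsStrictlyPositive' a ↔ IsStrictlyPositive a := by
  constructor
  · rintro ⟨δ, hδ, hle⟩
    have hδ' : IsStrictlyPositive (algebraMap ℝ A δ) := isStrictlyPositive_algebraMap hδ
    exact ⟨hδ'.nonneg.trans hle, CStarAlgebra.isUnit_of_le _ hle⟩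
  · intro ha
    cases subsingleton_or_nontrivial A
    · exact ⟨1, one_pos, (Subsingleton.elim _ _).le⟩
    · exact (CFC.exists_pos_algebraMap_le_iff ha.isSelfAdjoint).2 fun _ ↦ ha.spectrum_pos

theorem Matrix.isUnit_diagonal_iff {n R : Type*} [Fintype n] [DecidableEq n] [Semiring R]
    {d : n → R} : IsUnit (Matrix.diagonal d) ↔ ∀ i, IsUnit (d i) := by
  refine ⟨fun ⟨u, hu⟩ i ↦ ?_, fun h ↦ (Pi.isUnit_iff.2 h).map (Matrix.diagonalRingHom n R)⟩
  have hright := congrFun₂ u.mul_inv i i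
  have hleft := congrFun₂ u.inv_mul i i
  rw [hu, Matrix.diagonal_mul, Matrix.one_apply_eq] at hright
  rw [hu, Matrix.mul_diagonal, Matrix.one_apply_eq] at hleft
  exact ⟨⟨d i, _, hright, hleft⟩, rfl⟩

theorem Matrix.isUnit_fin_three_middle_column {R : Type*} [Ring R] (x y : R) :
    IsUnit !![1, x, 0; 0, 1, 0; 0, y, 1] := by
  refine ⟨⟨_, !![1, -x, 0; 0, 1, 0; 0, -y, 1], ?_, ?_⟩, rfl⟩ <;>
    simp [Matrix.one_fin_three]

theorem Matrix.tridiagonal_eq_star_mul_diagonal_mul {R : Type*} [Ring R] [StarRing R]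
    (x₁ x₂ : R) :
    !![1, x₁, 0; star x₁, 1, x₂; 0, star x₂, 1] =
      star !![1, x₁, 0; 0, 1, 0; 0, star x₂, 1] *
        Matrix.diagonal ![1, 1 - star x₁ * x₁ - x₂ * star x₂, 1] *
          !![1, x₁, 0; 0, 1, 0; 0, star x₂, 1] := by
  ext i j
  fin_cases i <;> fin_cases j <;> simp [Matrix.mul_apply, Fin.sum_univ_three, Matrix.star_apply]
  all_goals noncomm_ring

section

variable {A : Type*} [CStarAlgebra A] {n : ℕ}

theorem Matrix.IsStrictlyPositive.star_mul_mul {M N : Matrix (Fin n) (Fin n) A}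
    (hM : M.IsStrictlyPositive) (hN : IsUnit N) : (star N * M * N).IsStrictlyPositive := by
  obtain ⟨⟨B, rfl⟩, hunit⟩ := hM
  exact ⟨⟨B * N, by simp only [star_mul, mul_assoc]⟩, (hN.star.mul hunit).mul hN⟩

theorem Matrix.isStrictlyPositive_star_mul_mul_iff {M N : Matrix (Fin n) (Fin n) A}
    (hN : IsUnit N) : (star N * M * N).IsStrictlyPositive ↔ M.IsStrictlyPositive := by
  refine ⟨fun h ↦ ?_, (·.star_mul_mul hN)⟩
  obtain ⟨N', hNN', hN'N⟩ := isUnit_iff_exists.1 hN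
  have hM : M = star N' * (star N * M * N) * N' := calc
    M = star (N * N') * M * (N * N') := by rw [hNN', star_one, one_mul, mul_one]
    _ = star N' * (star N * M * N) * N' := by simp only [star_mul, mul_assoc]
  rw [hM]
  exact h.star_mul_mul ⟨⟨N', N, hN'N, hNN'⟩, rfl⟩

theorem Matrix.isStrictlyPositive_diagonal_iff [PartialOrder A] [StarOrderedRing A]
    {d : Fin n → A} :
    (Matrix.diagonal d).IsStrictlyPositive ↔ ∀ i, _root_.IsStrictlyPositive (d i) := by
  simp only [Matrix.IsStrictlyPositive, Matrix.isUnit_diagonal_iff,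
    IsStrictlyPositive.iff_of_unital, forall_and]
  refine and_congr_left' ⟨fun ⟨B, hB⟩ i ↦ ?_, fun h ↦ ?_⟩
  · have hdi := congrFun₂ hB i i
    rw [Matrix.diagonal_apply_eq, Matrix.mul_apply] at hdi
    rw [hdi]
    exact Finset.sum_nonneg fun k _ ↦ star_mul_self_nonneg (B k i)
  · choose b hb using fun i ↦ CStarAlgebra.nonneg_iff_eq_star_mul_self.1 (h i)
    refine ⟨Matrix.diagonal b, ?_⟩
    rw [Matrix.star_eq_conjTranspose, Matrix.diagonal_conjTranspose, Matrix.diagonal_mul_diagonal]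
    exact congrArg Matrix.diagonal (funext hb)

end

/-- the 3×3 tridiagonal matrix with unit diagonal and superdiagonal `(x₁, x₂)`
is strictly positive in `M₃(A)` iff `1 - x₁*x₁ - x₂x₂*` is strictly positive in `A`. -/
theorem stmt0 {A : Type*} [CStarAlgebra A] [PartialOrder A] [StarOrderedRing A] (x₁ x₂ : A) :
    Matrix.IsStrictlyPositive
        !![(1 : A), x₁, 0; star x₁, 1, x₂; 0, star x₂, 1] ↔
      IsStrictlyPositive' (1 - star x₁ * x₁ - x₂ * star x₂) := by
  rw [Matrix.tridiagonal_eq_star_mul_diagonal_mul,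
    Matrix.isStrictlyPositive_star_mul_mul_iff (Matrix.isUnit_fin_three_middle_column _ _),
    Matrix.isStrictlyPositive_diagonal_iff, isStrictlyPositive'_iff_isStrictlyPositive]
  simp [Fin.forall_fin_succ]
end

section
/- Let A be a unital C*-algebra and x ∈ A. If there exist positive elements a, b ∈ A with a + b = 1 such that the matrix [[a, x], [x*, b]] is positive in M₂(A), then the numerical radius of x satisfies w(x) ≤ 1/2. -/
open scoped ComplexOrder

/-- A state on a unital C*-algebra: a unital positive linear functional. -/
def IsState {A : Type*} [CStarAlgebra A] (φ : A →ₗ[ℂ] ℂ) : Prop :=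
  φ 1 = 1 ∧ ∀ a : A, 0 ≤ φ (star a * a)

/-- The numerical radius `w(x) = sup {|s(x)| : s a state of A}`. -/
noncomputable def numRadius {A : Type*} [CStarAlgebra A] (x : A) : ℝ :=
  sSup {r : ℝ | ∃ φ : A →ₗ[ℂ] ℂ, IsState φ ∧ r = ‖φ x‖}

/-!
For a state `φ` pick `c` with `|c| = 1` and `c φ(x) = -|φ(x)|`. Writing the positive matrix as
`C* C`, the element `a + b + c x + c̄ x*` is the sum of squares `∑ₖ vₖ* vₖ` with
`vₖ = Cₖ₀ + c Cₖ₁`, so `φ` of it is nonnegative; since `a + b = 1` and states are self-adjoint,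
this value is `1 + 2 Re (c φ(x)) = 1 - 2 |φ(x)|`.
-/

open ComplexConjugate Matrix

lemma Matrix.sum_star_mul_smul_conjTranspose_mul_self_apply {R A m n : Type*}
    [Fintype m] [Fintype n] [CommSemiring R] [StarRing R] [NonUnitalSemiring A] [StarRing A]
    [Module R A] [StarModule R A] [IsScalarTower R A A] [SMulCommClass R A A]
    (C : Matrix m n A) (v : n → R) :
    ∑ i, ∑ j, (star (v i) * v j) • (Cᴴ * C) i j
      = ∑ k, star (∑ j, v j • C k j) * ∑ j, v j • C k j := by
  simp only [mul_apply, conjTranspose_apply, star_sum, star_smul, Finset.sum_mul,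
    Finset.mul_sum, Finset.smul_sum, smul_mul_smul_comm]
  calc _ = ∑ i, ∑ k, ∑ j, (star (v i) * v j) • (star (C k i) * C k j) :=
        Finset.sum_congr rfl fun _ _ => Finset.sum_comm
    _ = _ := Finset.sum_comm.trans (Finset.sum_congr rfl fun _ _ => Finset.sum_comm)

lemma map_star_of_nonneg {A : Type*} [Ring A] [StarRing A] [Algebra ℂ A] [StarModule ℂ A]
    (φ : A →ₗ[ℂ] ℂ) (hφ : ∀ a : A, 0 ≤ φ (star a * a)) (y : A) :
    φ (star y) = conj (φ y) := by
  have im_eq_zero (a : A) : (φ (star a * a)).im = 0 := (Complex.nonneg_iff.mp (hφ a)).2.symm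
  have expand (c : ℂ) : φ (star (1 + c • y) * (1 + c • y))
      = φ 1 + c * φ y + conj c * φ (star y) + (conj c * c) * φ (star y * y) := by
    simp only [star_add, star_one, star_smul, add_mul, mul_add, one_mul, mul_one,
      smul_mul_assoc, mul_smul_comm, map_add, map_smul, smul_eq_mul, RCLike.star_def]
    ring
  have h_one_im : (φ 1).im = 0 := by simpa using im_eq_zero 1
  -- polarization: `c = 1` and `c = i` isolate the imaginary and the real part
  have h_one := im_eq_zero (1 + (1 : ℂ) • y)
  have h_I := im_eq_zero (1 + Complex.I • y)
  rw [expand] at h_one h_I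
  simp only [one_mul, map_one, mul_one, Complex.add_im, h_one_im, zero_add, im_eq_zero, add_zero,
    Complex.conj_I, neg_mul, Complex.I_mul_I, neg_neg, Complex.mul_im, Complex.I_re, zero_mul,
    Complex.I_im, Complex.neg_im] at h_one h_I
  exact Complex.ext (by rw [Complex.conj_re]; linarith) (by rw [Complex.conj_im]; linarith)

lemma Complex.exists_norm_eq_one_mul_eq_neg_norm (z : ℂ) :
    ∃ c : ℂ, ‖c‖ = 1 ∧ c * z = -‖z‖ := by
  rcases eq_or_ne z 0 with rfl | hz
  · exact ⟨1, by simp, by simp⟩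
  have hz' : (‖z‖ : ℂ) ≠ 0 := by exact_mod_cast norm_ne_zero_iff.mpr hz
  refine ⟨-conj z / ‖z‖, by simp [hz], ?_⟩
  rw [div_mul_eq_mul_div, neg_mul, Complex.conj_mul', div_eq_iff hz']
  ring

lemma IsState.norm_apply_le_half {A : Type*} [CStarAlgebra A] {φ : A →ₗ[ℂ] ℂ} (hφ : IsState φ)
    {x a b : A} (hab : a + b = 1) {C : Matrix (Fin 2) (Fin 2) A}
    (hC : !![a, x; star x, b] = star C * C) :
    ‖φ x‖ ≤ 1 / 2 := by
  obtain ⟨c, hc, hcφ⟩ := Complex.exists_norm_eq_one_mul_eq_neg_norm (φ x)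
  have hcc : conj c * c = 1 := by rw [Complex.conj_mul', hc]; simp
  have hgram := Matrix.sum_star_mul_smul_conjTranspose_mul_self_apply C ![1, c]
  rw [← star_eq_conjTranspose, ← hC] at hgram
  have hnonneg : 0 ≤ φ (a + b + c • x + conj c • star x) := by
    convert Finset.sum_nonneg fun k _ => hφ.2 (∑ j, ![1, c] j • C k j) using 1
    rw [← map_sum, ← hgram]
    congr 1
    simp only [RCLike.star_def, of_apply, cons_val', cons_val_fin_one, Fin.sum_univ_two,
      cons_val_zero, mul_one, cons_val_one, map_one, one_smul, one_mul, hcc]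
    abel
  have hval : φ (a + b + c • x + conj c • star x) = 1 - 2 * ‖φ x‖ := by
    rw [hab, map_add, map_add, hφ.1, map_smul, map_smul, map_star_of_nonneg φ hφ.2,
      smul_eq_mul, smul_eq_mul, ← map_mul, hcφ, map_neg, Complex.conj_ofReal]
    ring
  rw [hval] at hnonneg
  have : (0 : ℝ) ≤ 1 - 2 * ‖φ x‖ := by exact_mod_cast hnonneg
  linarith

theorem stmt3_general {A : Type*} [CStarAlgebra A]
    (x a b : A) (hab : a + b = 1)
    (hpos : ∃ C : Matrix (Fin 2) (Fin 2) A, !![a, x; star x, b] = star C * C) :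
    numRadius x ≤ 1 / 2 := by
  obtain ⟨C, hC⟩ := hpos
  refine Real.sSup_le ?_ (by norm_num)
  rintro _ ⟨φ, hφ, rfl⟩
  exact hφ.norm_apply_le_half hab hC

/-- if `a, b ≥ 0`, `a + b = 1` and `[[a, x], [x*, b]]` is positive in `M₂(A)`,
then `w(x) ≤ 1/2`. -/
theorem stmt3 {A : Type*} [CStarAlgebra A] [PartialOrder A] [StarOrderedRing A]
    (x a b : A) (ha : 0 ≤ a) (hb : 0 ≤ b) (hab : a + b = 1)
    (hpos : ∃ C : Matrix (Fin 2) (Fin 2) A, !![a, x; star x, b] = star C * C) :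
    numRadius x ≤ 1 / 2 :=
  stmt3_general x a b hab hpos
end

section
/- Let A be a unital C*-algebra and x ∈ A. If there exist positive invertible elements a, b ∈ A with a + b = 1 such that [[a, x], [x*, b]] is positive and invertible in M₂(A), then 1 + z·x + z̄·x* is positive and invertible in A for every z ∈ ℂ with |z| = 1. -/
open scoped ComplexOrder

/-- An element of a unital C*-algebra is positive and invertible iff it dominates a positive
multiple of the identity. -/
def IsStrictlyPositiveOrig {A : Type*} [CStarAlgebra A] [PartialOrder A] [StarOrderedRing A]
    (s : A) : Prop :=
  ∃ δ : ℝ, 0 < δ ∧ algebraMap ℝ A δ ≤ s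

/-!
With `e = (1, z)` one has `e* M e = a + b + z x + z̄ x* = 1 + z x + z̄ x*` for
`M = [[a, x], [x*, b]]`. Writing `M = B* B`, this is `w* w` with `w = B e`. Since `M` is invertible,
`B` has a left inverse `L`, so `L w = e` and some row combination `p · w` equals `1`. The
C⋆-valued Cauchy–Schwarz inequality then gives `1 = (p · w)* (p · w) ≤ ‖p‖² w* w`, i.e. `w* w`
dominates a positive multiple of `1`.
-/

open scoped InnerProductSpace WithCStarModule
open Matrix

lemma star_dotProduct_mulVec_of_norm_eq_one {R : Type*} [Ring R] [StarRing R] [Algebra ℂ R]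
    [StarModule ℂ R] (a x b : R) {z : ℂ} (hz : ‖z‖ = 1) :
    star ![1, algebraMap ℂ R z] ⬝ᵥ (!![a, x; star x, b] *ᵥ ![1, algebraMap ℂ R z])
      = a + b + z • x + starRingEnd ℂ z • star x := by
  have hzz : starRingEnd ℂ z * z = 1 := by
    rw [Complex.conj_mul', hz]; norm_num
  simp only [dotProduct, Fin.sum_univ_two, Algebra.algebraMap_eq_smul_one, Pi.star_apply,
    cons_mulVec, empty_mulVec, cons_val_zero, cons_val_one, cons_val_fin_one, star_one, star_smul,
    RCLike.star_def, mul_one, one_mul, Algebra.mul_smul_comm, Algebra.smul_mul_assoc, smul_add,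
    smul_smul, hzz, one_smul]
  abel

section

variable {A : Type*} [CStarAlgebra A] [PartialOrder A] [StarOrderedRing A]

lemma isStrictlyPositiveOrig_of_one_le_smul {s : A} (hs : 0 ≤ s) {K : ℝ} (hK : 0 ≤ K)
    (h : 1 ≤ K • s) : IsStrictlyPositiveOrig s := by
  have hK1 : 0 < K + 1 := by linarith
  refine ⟨(K + 1)⁻¹, inv_pos.mpr hK1, ?_⟩
  have h1 : 1 ≤ (K + 1) • s :=
    h.trans (by rw [add_smul, one_smul]; exact le_add_of_nonneg_right hs)
  rw [Algebra.algebraMap_eq_smul_one]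
  simpa [smul_smul, inv_mul_cancel₀ hK1.ne'] using
    smul_le_smul_of_nonneg_left h1 (inv_nonneg.mpr hK1.le)

lemma isStrictlyPositiveOrig_star_dotProduct_self {ι : Type*} [Fintype ι] {p w : ι → A}
    (h : p ⬝ᵥ w = 1) : IsStrictlyPositiveOrig (star w ⬝ᵥ w) := by
  let u : C⋆ᵐᵒᵈ(A, ι → A) := (WithCStarModule.equiv A _).symm p
  let v : C⋆ᵐᵒᵈ(A, ι → A) := (WithCStarModule.equiv A _).symm (star w)
  have hvu : ⟪v, u⟫_A = 1 := by
    simpa [u, v, WithCStarModule.pi_inner, WithCStarModule.inner_def, dotProduct] using h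
  have huv : ⟪u, v⟫_A = 1 := by rw [← CStarModule.star_inner, hvu, star_one]
  have hvv : ⟪v, v⟫_A = star w ⬝ᵥ w := by
    simp [v, WithCStarModule.pi_inner, WithCStarModule.inner_def, dotProduct]
  refine isStrictlyPositiveOrig_of_one_le_smul (hvv ▸ CStarModule.inner_self_nonneg)
    (sq_nonneg ‖u‖) ?_
  simpa [huv, hvu, hvv] using CStarModule.inner_mul_inner_swap_le (A := A) (x := u) (y := v)

lemma Matrix.IsStrictlyPositive.isStrictlyPositiveOrig_star_dotProduct_mulVec {n : ℕ}
    {M : Matrix (Fin n) (Fin n) A} (hM : M.IsStrictlyPositive) {q e : Fin n → A}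
    (he : q ⬝ᵥ e = 1) : IsStrictlyPositiveOrig (star e ⬝ᵥ (M *ᵥ e)) := by
  obtain ⟨⟨B, rfl⟩, hunit⟩ := hM
  obtain ⟨L, hL⟩ := hunit.exists_left_inv
  rw [← mulVec_mulVec, dotProduct_mulVec, star_eq_conjTranspose, ← star_mulVec]
  refine isStrictlyPositiveOrig_star_dotProduct_self (p := q ᵥ* (L * star B)) ?_
  rw [← dotProduct_mulVec, mulVec_mulVec, mul_assoc, hL, one_mulVec, he]

end

theorem stmt5_general {A : Type*} [CStarAlgebra A] [PartialOrder A] [StarOrderedRing A]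
    (x a b : A) (hab : a + b = 1)
    (hM : Matrix.IsStrictlyPositive !![a, x; star x, b]) :
    ∀ z : ℂ, ‖z‖ = 1 → IsStrictlyPositiveOrig (1 + z • x + (starRingEnd ℂ z) • star x) := by
  intro z hz
  rw [← hab, ← star_dotProduct_mulVec_of_norm_eq_one a x b hz]
  exact hM.isStrictlyPositiveOrig_star_dotProduct_mulVec (q := ![1, 0]) (by simp)

/-- if `a, b` are positive invertible, `a + b = 1` and `[[a, x], [x*, b]]` is
positive and invertible in `M₂(A)`, then `1 + z·x + z̄·x*` is positive and invertible in `A`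
for every `z ∈ ℂ` with `|z| = 1`. -/
theorem stmt5 {A : Type*} [CStarAlgebra A] [PartialOrder A] [StarOrderedRing A]
    (x a b : A) (ha : IsStrictlyPositiveOrig a) (hb : IsStrictlyPositiveOrig b) (hab : a + b = 1)
    (hM : Matrix.IsStrictlyPositive !![a, x; star x, b]) :
    ∀ z : ℂ, ‖z‖ = 1 → IsStrictlyPositiveOrig (1 + z • x + (starRingEnd ℂ z) • star x) :=
  stmt5_general x a b hab hM
end
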